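/- arXiv:1905.04895 — 2 statements merged into one kernel-verified Lean document; each statement's English description precedes it below -/
import Mathlib

section
/- For the orthogonal group acting on the sphere of states, the Haar average of (Ov)(Ov)ᵀ over O equals (1/|u|²)((1/(ℓ-1)) I_ℓ + ((ℓ-2)/(ℓ-1)) û ûᵀ), where v is any vector on the boundary sphere of the state space {w : u·w = 1, |w - u/|u|²| = r} with appropriate radius r, and O ranges over orthogonal maps fixing u. -/
/-! The second moment matrix `M = ∫ (Ov)(Ov)ᵀ dμ` satisfies `W M Wᵀ = M` for every orthogonal `W`
fixing `u`, by left invariance of `μ`. Conjugating by the Householder reflections in vectors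
`z ⊥ u` shows that `x ⬝ M y` vanishes when `x ⊥ u, y`, and that `x ⬝ M x` only depends on `|x|`
for `x ⊥ u`; hence `M = a uuᵀ + c I`. Since `O` fixes `u`, `u ⬝ Ov = u ⬝ v = 1`, so
`uᵀ M u = 1`, and `tr M = |Ov|² = |v|² = 2/|u|²`; these two equations determine `a` and `c`. -/

open Matrix MeasureTheory

instance (n m : ℕ) : MeasurableSpace (Matrix (Fin n) (Fin m) ℝ) :=
  MeasurableSpace.pi

namespace Matrix

variable {n : Type*} [Fintype n]

lemma dotProduct_self_nonneg (x : n → ℝ) : 0 ≤ x ⬝ᵥ x := by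
  simpa only [star_trivial] using dotProduct_self_star_nonneg x

lemma dotProduct_div_dotProduct_self_mul (a y : n → ℝ) :
    a ⬝ᵥ y / (a ⬝ᵥ a) * (a ⬝ᵥ a) = a ⬝ᵥ y :=
  div_mul_cancel_of_imp fun h => by simp [dotProduct_self_eq_zero.mp h]

lemma dotProduct_sub_smul_self_eq_zero (a y : n → ℝ) :
    a ⬝ᵥ (y - (a ⬝ᵥ y / (a ⬝ᵥ a)) • a) = 0 := by
  rw [dotProduct_sub, dotProduct_smul, smul_eq_mul, dotProduct_div_dotProduct_self_mul, sub_self]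

lemma abs_mul_le_dotProduct_self (w : n → ℝ) (i j : n) : |w i * w j| ≤ w ⬝ᵥ w := by
  have hsq : ∀ k, w k * w k ≤ w ⬝ᵥ w := fun k =>
    Finset.single_le_sum (f := fun l => w l * w l) (fun l _ => mul_self_nonneg (w l))
      (Finset.mem_univ k)
  refine abs_le_of_sq_le_sq ?_ ((mul_self_nonneg _).trans (hsq i))
  calc (w i * w j) ^ 2 = (w i * w i) * (w j * w j) := by ring
    _ ≤ (w ⬝ᵥ w) * (w ⬝ᵥ w) :=
      mul_le_mul (hsq i) (hsq j) (mul_self_nonneg _) ((mul_self_nonneg _).trans (hsq i))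
    _ = (w ⬝ᵥ w) ^ 2 := (sq _).symm

variable [DecidableEq n]

lemma mulVec_dotProduct_mulVec_of_mem_orthogonalGroup {O : Matrix n n ℝ}
    (hO : O ∈ orthogonalGroup n ℝ) (x y : n → ℝ) : O *ᵥ x ⬝ᵥ O *ᵥ y = x ⬝ᵥ y := by
  rw [dotProduct_mulVec, ← mulVec_transpose, mulVec_mulVec, (mem_orthogonalGroup_iff' n ℝ).mp hO,
    one_mulVec]

/-- For `z = 0` this is `1`, since `2 / 0 = 0`. -/
noncomputable def householder (z : n → ℝ) : Matrix n n ℝ :=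
  1 - (2 / (z ⬝ᵥ z)) • vecMulVec z z

lemma householder_mulVec (z w : n → ℝ) :
    householder z *ᵥ w = w - (2 / (z ⬝ᵥ z) * (z ⬝ᵥ w)) • z := by
  rw [householder, sub_mulVec, one_mulVec, smul_mulVec, vecMulVec_mulVec]
  ext i
  simp only [Pi.sub_apply, Pi.smul_apply, smul_eq_mul, MulOpposite.smul_eq_mul_unop,
    MulOpposite.unop_op]
  ring

lemma householder_mulVec_of_dotProduct_eq_zero {z w : n → ℝ} (h : z ⬝ᵥ w = 0) :
    householder z *ᵥ w = w := by
  simp [householder_mulVec, h]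

lemma householder_mulVec_self (z : n → ℝ) : householder z *ᵥ z = -z := by
  rcases eq_or_ne z 0 with rfl | hz
  · simp
  rw [householder_mulVec, div_mul_cancel₀ _ (dotProduct_self_eq_zero.not.mpr hz)]
  module

lemma householder_sub_mulVec {x y : n → ℝ} (h : x ⬝ᵥ x = y ⬝ᵥ y) :
    householder (x - y) *ᵥ x = y := by
  rcases eq_or_ne x y with rfl | hxy
  · simp [householder_mulVec]
  have hz : (x - y) ⬝ᵥ (x - y) ≠ 0 := dotProduct_self_eq_zero.not.mpr (sub_ne_zero.mpr hxy)
  have hxz : 2 * ((x - y) ⬝ᵥ x) = (x - y) ⬝ᵥ (x - y) := by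
    simp only [sub_dotProduct, dotProduct_sub, dotProduct_comm y x] at h ⊢
    linarith
  rw [householder_mulVec, div_mul_eq_mul_div, hxz, div_self hz, one_smul, sub_sub_cancel]

lemma transpose_householder (z : n → ℝ) : (householder z)ᵀ = householder z := by
  simp [householder, transpose_sub]

lemma householder_mul_self (z : n → ℝ) : householder z * householder z = 1 := by
  rcases eq_or_ne z 0 with rfl | hz
  · simp [householder]
  have hz : z ⬝ᵥ z ≠ 0 := dotProduct_self_eq_zero.not.mpr hz
  simp only [householder, sub_mul, mul_sub, one_mul, mul_one, smul_mul_smul,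
    vecMulVec_mul_vecMulVec, vecMulVec_smul]
  rw [smul_smul, ← sub_add, sub_sub, ← add_smul, sub_add, ← sub_smul]
  have hcoef : 2 / (z ⬝ᵥ z) + 2 / (z ⬝ᵥ z) - 2 / (z ⬝ᵥ z) * (2 / (z ⬝ᵥ z)) * (z ⬝ᵥ z) = 0 := by
    field_simp; ring
  rw [hcoef, zero_smul, sub_zero]

lemma householder_mem_orthogonalGroup (z : n → ℝ) :
    householder z ∈ orthogonalGroup n ℝ := by
  rw [mem_orthogonalGroup_iff, transpose_householder, householder_mul_self]

section StabilizerInvariant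

variable {M : Matrix n n ℝ} {u : n → ℝ}
  (hM : ∀ W ∈ orthogonalGroup n ℝ, W *ᵥ u = u → W * M * Wᵀ = M)
include hM

lemma householder_mulVec_dotProduct_mulVec {z : n → ℝ} (hz : u ⬝ᵥ z = 0) (x y : n → ℝ) :
    householder z *ᵥ x ⬝ᵥ M *ᵥ (householder z *ᵥ y) = x ⬝ᵥ M *ᵥ y := by
  have hconj := hM _ (householder_mem_orthogonalGroup z)
    (householder_mulVec_of_dotProduct_eq_zero (by rwa [dotProduct_comm]))
  rw [transpose_householder] at hconj
  conv_rhs => rw [← hconj, ← mulVec_mulVec, ← mulVec_mulVec, dotProduct_mulVec,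
    ← mulVec_transpose, transpose_householder]

lemma dotProduct_mulVec_eq_zero_of_orthogonal {x y : n → ℝ} (hx : u ⬝ᵥ x = 0)
    (hxy : x ⬝ᵥ y = 0) : x ⬝ᵥ M *ᵥ y = 0 ∧ y ⬝ᵥ M *ᵥ x = 0 := by
  have hHx := householder_mulVec_self x
  have hHy := householder_mulVec_of_dotProduct_eq_zero hxy
  have h₁ := householder_mulVec_dotProduct_mulVec hM hx x y
  have h₂ := householder_mulVec_dotProduct_mulVec hM hx y x
  rw [hHx, hHy, neg_dotProduct] at h₁
  rw [hHx, hHy, mulVec_neg, dotProduct_neg] at h₂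
  constructor <;> linarith

lemma dotProduct_mulVec_self_eq {x y : n → ℝ} (hx : u ⬝ᵥ x = 0) (hy : u ⬝ᵥ y = 0)
    (hxy : x ⬝ᵥ x = y ⬝ᵥ y) : x ⬝ᵥ M *ᵥ x = y ⬝ᵥ M *ᵥ y := by
  rw [← householder_mulVec_dotProduct_mulVec hM (z := x - y) (by simp [hx, hy]),
    householder_sub_mulVec hxy]

lemma exists_dotProduct_mulVec_self_eq_mul :
    ∃ c : ℝ, ∀ x, u ⬝ᵥ x = 0 → x ⬝ᵥ M *ᵥ x = c * (x ⬝ᵥ x) := by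
  by_cases h : ∃ z, u ⬝ᵥ z = 0 ∧ z ≠ 0
  swap
  · push Not at h
    exact ⟨0, fun x hx => by simp [h x hx]⟩
  obtain ⟨z, hzu, hz⟩ := h
  have hzz : 0 < z ⬝ᵥ z := by
    simpa only [star_trivial] using dotProduct_star_self_pos_iff.mpr hz
  refine ⟨z ⬝ᵥ M *ᵥ z / (z ⬝ᵥ z), fun x hx => ?_⟩
  -- rescale `z` to the length of `x`
  set r := √(x ⬝ᵥ x / (z ⬝ᵥ z))
  have hr : r * r = x ⬝ᵥ x / (z ⬝ᵥ z) :=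
    Real.mul_self_sqrt (div_nonneg (dotProduct_self_nonneg x) hzz.le)
  rw [dotProduct_mulVec_self_eq hM hx (y := r • z) (by simp [hzu])
    (by simp [← mul_assoc, hr, hzz.ne'])]
  simp only [mulVec_smul, dotProduct_smul, smul_dotProduct, smul_eq_mul, ← mul_assoc, hr]
  field_simp

lemma exists_dotProduct_mulVec_eq_mul :
    ∃ c : ℝ, ∀ x, u ⬝ᵥ x = 0 → ∀ y, x ⬝ᵥ M *ᵥ y = c * (x ⬝ᵥ y) := by
  obtain ⟨c, hc⟩ := exists_dotProduct_mulVec_self_eq_mul hM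
  refine ⟨c, fun x hx y => ?_⟩
  set t := x ⬝ᵥ y / (x ⬝ᵥ x)
  have hxy' := (dotProduct_mulVec_eq_zero_of_orthogonal hM hx
    (dotProduct_sub_smul_self_eq_zero x y)).1
  calc x ⬝ᵥ M *ᵥ y = x ⬝ᵥ M *ᵥ (t • x + (y - t • x)) := by rw [add_sub_cancel]
    _ = c * (t * (x ⬝ᵥ x)) := by
      rw [mulVec_add, dotProduct_add, hxy', mulVec_smul, dotProduct_smul, hc x hx, smul_eq_mul]
      ring
    _ = c * (x ⬝ᵥ y) := by rw [dotProduct_div_dotProduct_self_mul]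

theorem exists_eq_smul_vecMulVec_add_smul_one (hu : u ≠ 0) :
    ∃ a c : ℝ, M = a • vecMulVec u u + c • 1 := by
  obtain ⟨c, hc⟩ := exists_dotProduct_mulVec_eq_mul hM
  set s := u ⬝ᵥ u
  have hs : s ≠ 0 := dotProduct_self_eq_zero.not.mpr hu
  refine ⟨(u ⬝ᵥ M *ᵥ u / s - c) / s, c, ?_⟩
  suffices h : ∀ x y, x ⬝ᵥ M *ᵥ y
      = (u ⬝ᵥ M *ᵥ u / s - c) / s * ((u ⬝ᵥ x) * (u ⬝ᵥ y)) + c * (x ⬝ᵥ y) by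
    ext i j
    simpa [single_one_dotProduct, mulVec_single_one, vecMulVec_apply, one_apply,
      Pi.single_apply, eq_comm] using h (Pi.single i 1) (Pi.single j 1)
  intro x y
  set α := u ⬝ᵥ x / s
  set β := u ⬝ᵥ y / s
  have hp : u ⬝ᵥ (x - α • u) = 0 := dotProduct_sub_smul_self_eq_zero u x
  have hq : u ⬝ᵥ (y - β • u) = 0 := dotProduct_sub_smul_self_eq_zero u y
  have hpu := dotProduct_mulVec_eq_zero_of_orthogonal hM hp (dotProduct_comm u _ ▸ hp)
  have hqu := dotProduct_mulVec_eq_zero_of_orthogonal hM hq (dotProduct_comm u _ ▸ hq)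
  calc x ⬝ᵥ M *ᵥ y = (α • u + (x - α • u)) ⬝ᵥ M *ᵥ (β • u + (y - β • u)) := by
        rw [add_sub_cancel, add_sub_cancel]
    _ = α * β * (u ⬝ᵥ M *ᵥ u) + c * ((x - α • u) ⬝ᵥ (y - β • u)) := by
      simp only [mulVec_add, mulVec_smul, add_dotProduct, dotProduct_add, smul_dotProduct,
        dotProduct_smul, hpu.1, hqu.2, hc _ hp, smul_eq_mul]
      ring
    _ = _ := by
      simp only [sub_dotProduct, dotProduct_sub, smul_dotProduct, dotProduct_smul, smul_eq_mul,
        dotProduct_comm x u, α, β]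
      field_simp
      ring

end StabilizerInvariant

lemma smul_vecMulVec_add_smul_one_eq {u : n → ℝ} (hu : u ≠ 0) {a c : ℝ}
    (hquad : u ⬝ᵥ (a • vecMulVec u u + c • 1) *ᵥ u = 1)
    (htrace : (a • vecMulVec u u + c • 1).trace = 2 / (u ⬝ᵥ u)) :
    a • vecMulVec u u + c • 1 = (1 / (u ⬝ᵥ u)) •
      ((1 / ((Fintype.card n : ℝ) - 1)) • (1 : Matrix n n ℝ)
        + (((Fintype.card n : ℝ) - 2) / ((Fintype.card n : ℝ) - 1)) •
          vecMulVec ((√(u ⬝ᵥ u))⁻¹ • u) ((√(u ⬝ᵥ u))⁻¹ • u)) := by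
  set s := u ⬝ᵥ u
  set d := (Fintype.card n : ℝ)
  have hs : s ≠ 0 := dotProduct_self_eq_zero.not.mpr hu
  have h₁ : a * (s * s) + c * s = 1 := by
    simpa [add_mulVec, smul_mulVec, vecMulVec_mulVec] using hquad
  have h₂ : a * s + c * d = 2 / s := by
    simpa [trace_add, trace_smul, trace_vecMulVec, trace_one] using htrace
  have hc : c * s * (d - 1) = 1 := by
    field_simp at h₂
    linear_combination h₂ - h₁
  have hd : d - 1 ≠ 0 := right_ne_zero_of_mul_eq_one hc
  have hnormalize : vecMulVec ((√s)⁻¹ • u) ((√s)⁻¹ • u) = s⁻¹ • vecMulVec u u := by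
    rw [smul_vecMulVec, vecMulVec_smul, smul_smul, ← mul_inv,
      Real.mul_self_sqrt (dotProduct_self_nonneg u)]
  rw [hnormalize]
  match_scalars
  · field_simp
    linear_combination (d - 1) * h₁ - hc
  · field_simp
    linear_combination hc

end Matrix

section SecondMoment

variable {Ω n : Type*} [MeasurableSpace Ω] (μ : Measure Ω) (X : Ω → n → ℝ)

noncomputable def secondMoment : Matrix n n ℝ :=
  Matrix.of fun i j => ∫ ω, X ω i * X ω j ∂μ

variable {μ X}

lemma secondMoment_map {Ω' : Type*} [MeasurableSpace Ω'] {f : Ω' → Ω} {ν : Measure Ω'}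
    (hf : AEMeasurable f ν) (hX : Measurable X) :
    secondMoment (ν.map f) X = secondMoment ν (X ∘ f) := by
  ext i j
  exact integral_map hf
    (((measurable_pi_apply i).comp hX).mul ((measurable_pi_apply j).comp hX)).aestronglyMeasurable

variable [Fintype n]

lemma integrable_apply_mul_apply [IsFiniteMeasure μ] (hX : AEStronglyMeasurable X μ) {C : ℝ}
    (hC : ∀ᵐ ω ∂μ, X ω ⬝ᵥ X ω ≤ C) (i j : n) :
    Integrable (fun ω => X ω i * X ω j) μ := by
  refine Integrable.mono' (integrable_const C) ?_ ?_
  · exact ((continuous_apply i).comp_aestronglyMeasurable hX).mul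
      ((continuous_apply j).comp_aestronglyMeasurable hX)
  · filter_upwards [hC] with ω hω
    exact (abs_mul_le_dotProduct_self _ i j).trans hω

lemma dotProduct_mulVec_secondMoment (hX : ∀ i j, Integrable (fun ω => X ω i * X ω j) μ)
    (x y : n → ℝ) :
    x ⬝ᵥ secondMoment μ X *ᵥ y = ∫ ω, (x ⬝ᵥ X ω) * (y ⬝ᵥ X ω) ∂μ := by
  have hexpand : ∀ ω, (x ⬝ᵥ X ω) * (y ⬝ᵥ X ω) = ∑ i, ∑ j, x i * y j * (X ω i * X ω j) := by
    intro ω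
    simp only [dotProduct, Finset.sum_mul_sum]
    exact Finset.sum_congr rfl fun i _ => Finset.sum_congr rfl fun j _ => by ring
  simp_rw [hexpand]
  rw [integral_finsetSum _ fun i _ => integrable_finsetSum _ fun j _ => (hX i j).const_mul _]
  simp only [dotProduct, mulVec, secondMoment, of_apply, Finset.mul_sum]
  refine Finset.sum_congr rfl fun i _ => ?_
  rw [integral_finsetSum _ fun j _ => (hX i j).const_mul _]
  refine Finset.sum_congr rfl fun j _ => ?_
  rw [integral_const_mul]
  ring

lemma trace_secondMoment (hX : ∀ i, Integrable (fun ω => X ω i * X ω i) μ) :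
    (secondMoment μ X).trace = ∫ ω, X ω ⬝ᵥ X ω ∂μ := by
  simp only [trace, diag, secondMoment, of_apply, dotProduct]
  rw [integral_finsetSum _ fun i _ => hX i]

lemma secondMoment_mulVec [DecidableEq n] (hX : ∀ i j, Integrable (fun ω => X ω i * X ω j) μ)
    (W : Matrix n n ℝ) :
    secondMoment μ (fun ω => W *ᵥ X ω) = W * secondMoment μ X * Wᵀ := by
  ext i j
  have hentry : (W * secondMoment μ X * Wᵀ) i j = W i ⬝ᵥ secondMoment μ X *ᵥ W j := by
    rw [Matrix.mul_assoc, mul_apply']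
    rfl
  rw [hentry, dotProduct_mulVec_secondMoment hX]
  rfl

end SecondMoment

instance (n m : ℕ) : BorelSpace (Matrix (Fin n) (Fin m) ℝ) :=
  inferInstanceAs (BorelSpace (Fin n → Fin m → ℝ))

section Stabilizer

variable {ℓ : ℕ} {μ : Measure (Matrix (Fin ℓ) (Fin ℓ) ℝ)} [IsProbabilityMeasure μ]
  {u v : Fin ℓ → ℝ}

lemma measurable_mulVec_const :
    Measurable fun O : Matrix (Fin ℓ) (Fin ℓ) ℝ => O *ᵥ v :=
  (continuous_id.matrix_mulVec continuous_const).measurable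

lemma integrable_mulVec_apply_mul_mulVec_apply (h : ∀ᵐ O ∂μ, O ∈ orthogonalGroup (Fin ℓ) ℝ)
    (i j : Fin ℓ) : Integrable (fun O => (O *ᵥ v) i * (O *ᵥ v) j) μ :=
  integrable_apply_mul_apply measurable_mulVec_const.aestronglyMeasurable
    (h.mono fun _ hO => (mulVec_dotProduct_mulVec_of_mem_orthogonalGroup hO v v).le) i j

lemma mul_secondMoment_mulVec_mul_transpose (h : ∀ᵐ O ∂μ, O ∈ orthogonalGroup (Fin ℓ) ℝ)
    {W : Matrix (Fin ℓ) (Fin ℓ) ℝ} (hW : μ.map (W * ·) = μ) :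
    W * secondMoment μ (· *ᵥ v) * Wᵀ = secondMoment μ (· *ᵥ v) := by
  rw [← secondMoment_mulVec (integrable_mulVec_apply_mul_mulVec_apply h)]
  conv_rhs => rw [← hW, secondMoment_map (continuous_const_mul W).aemeasurable
    measurable_mulVec_const]
  simp only [Function.comp_def, mulVec_mulVec]

lemma trace_secondMoment_mulVec (h : ∀ᵐ O ∂μ, O ∈ orthogonalGroup (Fin ℓ) ℝ) :
    (secondMoment μ (· *ᵥ v)).trace = v ⬝ᵥ v := by
  rw [trace_secondMoment fun i => integrable_mulVec_apply_mul_mulVec_apply h i i,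
    integral_congr_ae (h.mono fun _ hO => mulVec_dotProduct_mulVec_of_mem_orthogonalGroup hO v v)]
  simp

lemma dotProduct_mulVec_secondMoment_mulVec_self
    (h : ∀ᵐ O ∂μ, O ∈ orthogonalGroup (Fin ℓ) ℝ ∧ O *ᵥ u = u) :
    u ⬝ᵥ secondMoment μ (· *ᵥ v) *ᵥ u = (u ⬝ᵥ v) ^ 2 := by
  rw [dotProduct_mulVec_secondMoment
      (integrable_mulVec_apply_mul_mulVec_apply (h.mono fun _ hO => hO.1)),
    integral_congr_ae (g := fun _ => (u ⬝ᵥ v) ^ 2)]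
  · simp
  filter_upwards [h] with O hO
  rw [← hO.2, mulVec_dotProduct_mulVec_of_mem_orthogonalGroup hO.1, hO.2, sq]

end Stabilizer

theorem haar_average_outer_product_general
    (ℓ : ℕ) (u : Fin ℓ → ℝ)
    (μ : Measure (Matrix (Fin ℓ) (Fin ℓ) ℝ)) [IsProbabilityMeasure μ]
    (hsupp : μ {O | ¬ (O ∈ Matrix.orthogonalGroup (Fin ℓ) ℝ ∧ O.mulVec u = u)} = 0)
    (hinv : ∀ O₀ ∈ Matrix.orthogonalGroup (Fin ℓ) ℝ, O₀.mulVec u = u →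
      Measure.map (fun O => O₀ * O) μ = μ)
    (v : Fin ℓ → ℝ) (hv : u ⬝ᵥ v = 1) (hbd : v ⬝ᵥ v = 2 / (u ⬝ᵥ u)) :
    ∀ i j, (∫ O, (Matrix.mulVec O v i) * (Matrix.mulVec O v j) ∂μ)
      = ((1 / (u ⬝ᵥ u)) •
          ((1 / ((ℓ : ℝ) - 1)) • (1 : Matrix (Fin ℓ) (Fin ℓ) ℝ)
            + (((ℓ : ℝ) - 2) / ((ℓ : ℝ) - 1)) •
              vecMulVec ((Real.sqrt (u ⬝ᵥ u))⁻¹ • u) ((Real.sqrt (u ⬝ᵥ u))⁻¹ • u))) i j := by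
  have hstab : ∀ᵐ O ∂μ, O ∈ orthogonalGroup (Fin ℓ) ℝ ∧ O *ᵥ u = u := ae_iff.mpr hsupp
  have horth := hstab.mono fun _ hO => hO.1
  have hu : u ≠ 0 := by rintro rfl; simp at hv
  obtain ⟨a, c, hM⟩ := exists_eq_smul_vecMulVec_add_smul_one
    (fun W hW hWu => mul_secondMoment_mulVec_mul_transpose horth (hinv W hW hWu)) hu
  have hquad : u ⬝ᵥ secondMoment μ (· *ᵥ v) *ᵥ u = 1 := by
    rw [dotProduct_mulVec_secondMoment_mulVec_self hstab, hv, one_pow]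
  have htrace : (secondMoment μ (· *ᵥ v)).trace = 2 / (u ⬝ᵥ u) := by
    rw [trace_secondMoment_mulVec horth, hbd]
  rw [hM] at hquad htrace
  intro i j
  simpa [secondMoment] using
    congrFun (congrFun (hM.trans (smul_vecMulVec_add_smul_one_eq hu hquad htrace)) i) j

/-- The Haar (i.e. invariant probability) average of `(Ov)(Ov)ᵀ`, over orthogonal
maps `O` fixing `u`, applied to a vector `v` on the boundary sphere of the state
space, equals `(1/|u|²)((1/(ℓ-1)) I + ((ℓ-2)/(ℓ-1)) û ûᵀ)` (entrywise). -/
theorem haar_average_outer_product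
    (ℓ : ℕ) (hℓ : 2 ≤ ℓ) (u : Fin ℓ → ℝ) (hu : u ≠ 0)
    (μ : Measure (Matrix (Fin ℓ) (Fin ℓ) ℝ)) [IsProbabilityMeasure μ]
    (hsupp : μ {O | ¬ (O ∈ Matrix.orthogonalGroup (Fin ℓ) ℝ ∧ O.mulVec u = u)} = 0)
    (hinv : ∀ O₀ ∈ Matrix.orthogonalGroup (Fin ℓ) ℝ, O₀.mulVec u = u →
      Measure.map (fun O => O₀ * O) μ = μ)
    (v : Fin ℓ → ℝ) (hv : u ⬝ᵥ v = 1) (hbd : v ⬝ᵥ v = 2 / (u ⬝ᵥ u)) :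
    ∀ i j, (∫ O, (Matrix.mulVec O v i) * (Matrix.mulVec O v j) ∂μ)
      = ((1 / (u ⬝ᵥ u)) •
          ((1 / ((ℓ : ℝ) - 1)) • (1 : Matrix (Fin ℓ) (Fin ℓ) ℝ)
            + (((ℓ : ℝ) - 2) / ((ℓ : ℝ) - 1)) •
              vecMulVec ((Real.sqrt (u ⬝ᵥ u))⁻¹ • u) ((Real.sqrt (u ⬝ᵥ u))⁻¹ • u))) i j :=
  haar_average_outer_product_general ℓ u μ hsupp hinv v hv hbd
end

section
/- Commutativity of data-driven inference with injective relabelings: let X ⊆ ℝ^ℓ, 𝒳 ⊆ ℝ^n, and L a linear map with L⁺L 𝒳 = 𝒳 (L acts injectively on span 𝒳). Then the set of constraint-satisfying maps transforms covariantly: L ∘ {M : 𝒳 ⊆ MX ⊆ span 𝒳} = {M' : L𝒳 ⊆ M'X ⊆ span L𝒳} ∩ {M' : supp M' ⊆ range L}, where L⁺ is the Moore–Penrose pseudoinverse. -/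
/-!
Multiplying on the left by any matrix `A` maps `ℒ(𝒳|X)` into `ℒ(A𝒳|X)`, since images commute
with composition and `A (span 𝒳) = span (A𝒳)`. This gives `L ∘ ℒ(𝒳|X)` inside the right-hand
side. Conversely, for `M'` on the right-hand side take `M = L⁺M'`: then `LM = M'` because `LL⁺`
fixes the range of `L`, and `M ∈ ℒ(L⁺L𝒳|X) = ℒ(𝒳|X)`.
-/

open Matrix

/-- `P` is the Moore–Penrose pseudoinverse of `L`. -/
def IsMoorePenroseInv {m n : ℕ} (L : Matrix (Fin m) (Fin n) ℝ)
    (P : Matrix (Fin n) (Fin m) ℝ) : Prop :=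
  L * P * L = L ∧ P * L * P = P ∧ (L * P)ᵀ = L * P ∧ (P * L)ᵀ = P * L

section

variable {R ι κ μ : Type*} [CommRing R] [Fintype ι] [Fintype κ]

/-- The paper's `ℒ(𝒳|X)`. -/
def consistentMaps (X : Set (κ → R)) (𝒳 : Set (ι → R)) : Set (Matrix ι κ R) :=
  {M | 𝒳 ⊆ M.mulVec '' X ∧ M.mulVec '' X ⊆ (Submodule.span R 𝒳 : Set (ι → R))}

theorem mul_mem_consistentMaps {X : Set (κ → R)} {𝒳 : Set (ι → R)} {M : Matrix ι κ R}
    (A : Matrix μ ι R) (hM : M ∈ consistentMaps X 𝒳) :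
    A * M ∈ consistentMaps X (A.mulVec '' 𝒳) := by
  obtain ⟨hsub, hspan⟩ := hM
  have himage : (A * M).mulVec '' X = A.mulVec '' (M.mulVec '' X) := by
    rw [Set.image_image]
    simp only [mulVec_mulVec]
  refine ⟨himage ▸ Set.image_mono hsub, ?_⟩
  rw [himage]
  exact (Set.image_mono hspan).trans (Submodule.image_span_subset_span A.mulVecLin 𝒳)

theorem mul_mul_eq_self_of_mulVec_mem_range [Fintype μ]
    {L : Matrix μ ι R} {P : Matrix ι μ R} {M : Matrix μ κ R} (hLPL : L * P * L = L)
    (hrange : ∀ w, M.mulVec w ∈ LinearMap.range L.mulVecLin) :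
    L * (P * M) = M := by
  refine ext_iff_mulVec.2 fun w => ?_
  obtain ⟨u, hu⟩ := hrange w
  rw [← mulVec_mulVec, ← mulVec_mulVec, ← hu, mulVecLin_apply, mulVec_mulVec,
    mulVec_mulVec, hLPL]

theorem image_mulVec_image_mulVec_of_forall_mulVec_eq [Fintype μ] {L : Matrix μ ι R}
    {P : Matrix ι μ R} {𝒳 : Set (ι → R)} (hfix : ∀ x ∈ 𝒳, (P * L).mulVec x = x) :
    P.mulVec '' (L.mulVec '' 𝒳) = 𝒳 := by
  rw [Set.image_image]
  exact Set.EqOn.image_eq_self fun x hx => (mulVec_mulVec x P L).trans (hfix x hx)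

end

/-- Commutativity of the consistency constraints with injective relabelings:
if `L⁺L` fixes `𝒳`, then `L ∘ ℒ(𝒳|X)` equals the set of maps `M'` satisfying
the relabeled constraints `L𝒳 ⊆ M'X ⊆ span(L𝒳)` and whose range lies in the
range of `L`. -/
theorem ddi_commutativity
    (ℓ n m : ℕ) (Xset : Set (Fin ℓ → ℝ)) (calX : Set (Fin n → ℝ))
    (L : Matrix (Fin m) (Fin n) ℝ) (P : Matrix (Fin n) (Fin m) ℝ)
    (hP : IsMoorePenroseInv L P)
    (hfix : ∀ x ∈ calX, (P * L).mulVec x = x) :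
    (fun M : Matrix (Fin n) (Fin ℓ) ℝ => L * M) ''
        {M | calX ⊆ M.mulVec '' Xset
          ∧ M.mulVec '' Xset ⊆ (Submodule.span ℝ calX : Set (Fin n → ℝ))}
      = {M' : Matrix (Fin m) (Fin ℓ) ℝ |
          (L.mulVec '' calX ⊆ M'.mulVec '' Xset
            ∧ M'.mulVec '' Xset
              ⊆ (Submodule.span ℝ (L.mulVec '' calX) : Set (Fin m → ℝ)))
          ∧ ∀ w, M'.mulVec w ∈ LinearMap.range L.mulVecLin} := by
  ext M'
  constructor
  · rintro ⟨M, hM, rfl⟩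
    exact ⟨mul_mem_consistentMaps L hM,
      fun w => ⟨M.mulVec w, by rw [mulVecLin_apply, mulVec_mulVec]⟩⟩
  · rintro ⟨hM', hrange⟩
    have hPM' : P * M' ∈ consistentMaps Xset calX := by
      simpa only [image_mulVec_image_mulVec_of_forall_mulVec_eq hfix]
        using mul_mem_consistentMaps P hM'
    exact ⟨P * M', hPM', mul_mul_eq_self_of_mulVec_mem_range hP.1 hrange⟩
end
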